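/- Let n be even and let (λ₁, v) be a real eigenpair of the n×n real matrix A, where every component of v is nonzero. Let S = diag(v) and B = S^{-1} A S. For each j, let β_j be the (n/2)-th largest element among the n−1 off-diagonal entries b_{1j}, …, b_{j−1,j}, b_{j+1,j}, …, b_{nj} of column j of B, and let F = [f_{ij}] = [b_{ij} − β_j]. If λ is a complex eigenvalue of A with λ ≠ λ₁, then |λ| ≤ max_{1≤i≤n} (|f_{ii}| + r̂_i(F^T)), where r̂_i(F^T) is the radius of the i-th Gershgorin disc of the second type of F^T (computed from the i-th column of F). -/

import Mathlib

open Matrix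
open scoped ENNReal

/-- Non-increasing (descending) sort of a list of reals. -/
noncomputable def sortDesc (l : List ℝ) : List ℝ := (l.insertionSort (· ≤ ·)).reverse

/-- Given the descending rearrangement `l` of `n` numbers, the sum of the largest
(about) half minus the sum of the smallest (about) half, skipping the middle
element when `n` is odd. -/
noncomputable def halfSumDiff (n : ℕ) (l : List ℝ) : ℝ :=
  if n % 2 = 1 then (l.take ((n - 1) / 2)).sum - (l.drop ((n + 1) / 2)).sum
  else (l.take (n / 2)).sum - (l.drop (n / 2)).sum

/-- Radius of the `i`-th Gershgorin disc of the second type of `M`, computed from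
the `i`-th row of `M` with the diagonal entry replaced by `0`. -/
noncomputable def secondTypeRadius {n : ℕ} (M : Matrix (Fin n) (Fin n) ℝ) (i : Fin n) : ℝ :=
  halfSumDiff n (sortDesc (List.ofFn fun j : Fin n => if j = i then 0 else M i j))

/-- The `i`-th Gershgorin disc of the second type of `M`. -/
noncomputable def secondTypeDisc {n : ℕ} (M : Matrix (Fin n) (Fin n) ℝ) (i : Fin n) : Set ℂ :=
  Metric.closedBall ((M i i : ℝ) : ℂ) (secondTypeRadius M i)

/-- The Gershgorin region of the second type of `M`. -/
noncomputable def secondTypeRegion {n : ℕ} (M : Matrix (Fin n) (Fin n) ℝ) : Set ℂ :=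
  ⋃ i : Fin n, secondTypeDisc M i

/-- `μ` is a (complex) eigenvalue of the real matrix `A`, i.e. a complex root of
its characteristic polynomial. -/
def IsEigenvalueC {n : ℕ} (A : Matrix (Fin n) (Fin n) ℝ) (μ : ℂ) : Prop :=
  ((A.map ((↑) : ℝ → ℂ)).charpoly).IsRoot μ

/-- The `k`-th largest element (1-indexed) among the `n - 1` off-diagonal entries of
column `j` of `B`. -/
noncomputable def kthLargestOffDiag {n : ℕ} (B : Matrix (Fin n) (Fin n) ℝ) (j : Fin n)
    (k : ℕ) : ℝ :=
  (sortDesc (((List.ofFn fun i : Fin n => B i j).eraseIdx j.val))).getD (k - 1) 0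

/-- The ℓ_p norm of a vector in ℝ^n. -/
noncomputable def lpNorm {n : ℕ} (p : ℝ≥0∞) (x : Fin n → ℝ) : ℝ :=
  @norm (PiLp p fun _ : Fin n => ℝ) _ ((WithLp.equiv p (∀ _ : Fin n, ℝ)).symm x)

/-- The seminorm-like quantity `τ_p(B)`: the supremum of `‖Bᵀ x‖_p` over all real
vectors `x` with `xᵀ e = 0` and `‖x‖_p = 1`. -/
noncomputable def tau {n : ℕ} (p : ℝ≥0∞) (B : Matrix (Fin n) (Fin n) ℝ) : ℝ :=
  sSup { t : ℝ | ∃ x : Fin n → ℝ, (∑ i, x i) = 0 ∧ lpNorm p x = 1 ∧ t = lpNorm p (Bᵀ *ᵥ x) }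

/-- The Ostrowski–Brauer set `Γ(M)` of a real square matrix `M`. -/
noncomputable def brauerSet {n : ℕ} (M : Matrix (Fin n) (Fin n) ℝ) : Set ℂ :=
  ⋃ (i : Fin n) (j : Fin n) (_ : i < j),
    { y : ℂ | ‖y - (M i i : ℝ)‖ * ‖y - (M j j : ℝ)‖ ≤
        (∑ k ∈ Finset.univ.filter fun k => k ≠ i, |M i k|) *
        (∑ k ∈ Finset.univ.filter fun k => k ≠ j, |M j k|) }

/-- `cs_j(A)` from Definition 2.3: sorted column sums difference. -/
noncomputable def csCol {n : ℕ} (A : Matrix (Fin n) (Fin n) ℝ) (j : Fin n) : ℝ :=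
  halfSumDiff n (sortDesc (List.ofFn fun i : Fin n => A i j))

/-! Because `B 𝟙 = λ₁ 𝟙`, a left eigenvector `y` of `B` for `μ ≠ λ₁` has `∑ yⱼ = 0`; so `y` is
also a left eigenvector of `F`, which differs from `B` by the rank-one matrix `𝟙 βᵀ`. At an index
`i` where `|yᵢ|` is maximal, `μ - fᵢᵢ = ∑ⱼ cⱼ tⱼ`, where `c` is column `i` of `F` with `fᵢᵢ`
replaced by `0` and `tⱼ = yⱼ / yᵢ` lies in the unit disc with `∑ tⱼ = 0`. The sum is therefore
unchanged when every `cⱼ` is shifted by a median `m` of `c`, hence at most `∑ |cⱼ - m|`, and this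
is exactly `r̂ᵢ(Fᵀ)`. -/

lemma sortDesc_perm (l : List ℝ) : (sortDesc l).Perm l :=
  (l.insertionSort (· ≤ ·)).reverse_perm.trans (List.perm_insertionSort _ l)

lemma sortDesc_pairwise (l : List ℝ) : (sortDesc l).Pairwise (· ≥ ·) := by
  rw [sortDesc, List.pairwise_reverse]
  exact List.pairwise_insertionSort (· ≤ ·) l

lemma sum_map_abs_sub_of_forall_le {l : List ℝ} {m : ℝ} (h : ∀ a ∈ l, m ≤ a) :
    (l.map fun x => |x - m|).sum = l.sum - l.length * m := by
  induction l with
  | nil => simp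
  | cons a l ih =>
    simp only [List.forall_mem_cons] at h
    simp [ih h.2, abs_of_nonneg (sub_nonneg.2 h.1)]
    ring

lemma sum_map_abs_sub_of_forall_ge {l : List ℝ} {m : ℝ} (h : ∀ a ∈ l, a ≤ m) :
    (l.map fun x => |x - m|).sum = l.length * m - l.sum := by
  induction l with
  | nil => simp
  | cons a l ih =>
    simp only [List.forall_mem_cons] at h
    simp [ih h.2, abs_of_nonpos (sub_nonpos.2 h.1)]
    ring

lemma halfSumDiff_eq_sum_map_abs_sub_median {n : ℕ} {l : List ℝ} (hl : l.Pairwise (· ≥ ·))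
    (hlen : l.length = n) (hn : 0 < n) :
    halfSumDiff n l = (l.map fun x => |x - l[n / 2]'(by omega)|).sum := by
  have hk : n / 2 < l.length := by omega
  set m := l[n / 2]
  have hsplit : l = l.take (n / 2) ++ m :: l.drop (n / 2 + 1) := by
    rw [← List.drop_eq_getElem_cons hk, List.take_append_drop]
  have hsorted := hsplit ▸ hl
  rw [List.pairwise_append, List.pairwise_cons] at hsorted
  obtain ⟨-, ⟨hm, -⟩, hbig⟩ := hsorted
  have hlarge : ∀ a ∈ l.take (n / 2), m ≤ a := fun a ha => hbig a ha m List.mem_cons_self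
  conv_rhs => rw [hsplit, List.map_append, List.map_cons, List.sum_append, List.sum_cons, sub_self,
    abs_zero, zero_add, sum_map_abs_sub_of_forall_le hlarge, sum_map_abs_sub_of_forall_ge hm,
    List.length_take_of_le hk.le, List.length_drop, hlen]
  rw [halfSumDiff]
  split_ifs with hodd
  · rw [show (n - 1) / 2 = n / 2 by omega, show (n + 1) / 2 = n / 2 + 1 by omega,
      show n - (n / 2 + 1) = n / 2 by omega]
    ring
  · rw [List.drop_eq_getElem_cons hk, List.sum_cons]
    have : ((n - (n / 2 + 1) : ℕ) : ℝ) + 1 = (n / 2 : ℕ) := by norm_cast; omega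
    linear_combination (-m) * this

lemma norm_sum_mul_le_sum_abs_sub {ι : Type*} [Fintype ι] (c : ι → ℝ) {t : ι → ℂ}
    (ht : ∀ j, ‖t j‖ ≤ 1) (ht0 : ∑ j, t j = 0) (m : ℝ) :
    ‖∑ j, (c j : ℂ) * t j‖ ≤ ∑ j, |c j - m| := by
  have hshift : ∑ j, (c j : ℂ) * t j = ∑ j, ((c j - m : ℝ) : ℂ) * t j := by
    simp only [Complex.ofReal_sub, sub_mul, Finset.sum_sub_distrib, ← Finset.mul_sum, ht0,
      mul_zero, sub_zero]
  rw [hshift]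
  refine (norm_sum_le _ _).trans (Finset.sum_le_sum fun j _ => ?_)
  rw [norm_mul, Complex.norm_real, Real.norm_eq_abs]
  exact mul_le_of_le_one_right (abs_nonneg _) (ht j)

lemma norm_sum_mul_le_halfSumDiff {n : ℕ} (c : Fin n → ℝ) {t : Fin n → ℂ}
    (ht : ∀ j, ‖t j‖ ≤ 1) (ht0 : ∑ j, t j = 0) :
    ‖∑ j, (c j : ℂ) * t j‖ ≤ halfSumDiff n (sortDesc (List.ofFn c)) := by
  rcases Nat.eq_zero_or_pos n with rfl | hn
  · simp [halfSumDiff, sortDesc]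
  have hperm := sortDesc_perm (List.ofFn c)
  have hlen : (sortDesc (List.ofFn c)).length = n := by rw [hperm.length_eq, List.length_ofFn]
  rw [halfSumDiff_eq_sum_map_abs_sub_median (sortDesc_pairwise _) hlen hn]
  rw [(hperm.map _).sum_eq, List.map_ofFn, List.sum_ofFn]
  exact norm_sum_mul_le_sum_abs_sub c ht ht0 _

lemma sum_offDiag_mul_eq {n : ℕ} (M : Matrix (Fin n) (Fin n) ℝ) (x : Fin n → ℂ) (i : Fin n) :
    ∑ j, ((if j = i then 0 else M i j : ℝ) : ℂ) * x j = (M.map (↑) *ᵥ x) i - M i i * x i := by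
  simp only [mulVec, dotProduct, map_apply, apply_ite ((↑) : ℝ → ℂ), Complex.ofReal_zero, ite_mul,
    zero_mul, Finset.sum_ite, Finset.sum_const_zero, zero_add, Finset.filter_ne',
    Finset.sum_erase_eq_sub (Finset.mem_univ i)]

theorem mem_secondTypeDisc_of_mulVec_eq_smul {n : ℕ} (M : Matrix (Fin n) (Fin n) ℝ)
    {x : Fin n → ℂ} {mu : ℂ} (hx : M.map (↑) *ᵥ x = mu • x) (hsum : ∑ j, x j = 0) {i : Fin n}
    (hxi : x i ≠ 0) (hmax : ∀ j, ‖x j‖ ≤ ‖x i‖) : mu ∈ secondTypeDisc M i := by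
  have hshift : ∑ j, ((if j = i then 0 else M i j : ℝ) : ℂ) * (x j / x i) = mu - M i i := by
    simp only [← mul_div_assoc, ← Finset.sum_div, sum_offDiag_mul_eq, hx, Pi.smul_apply,
      smul_eq_mul, ← sub_mul, mul_div_cancel_right₀ _ hxi]
  rw [secondTypeDisc, Metric.mem_closedBall, dist_eq_norm, ← hshift]
  refine norm_sum_mul_le_halfSumDiff _ (fun j => ?_) ?_
  · rw [norm_div, div_le_one (norm_pos_iff.2 hxi)]
    exact hmax j
  · rw [← Finset.sum_div, hsum, zero_div]

theorem mem_secondTypeRegion_of_mulVec_eq_smul {n : ℕ} (M : Matrix (Fin n) (Fin n) ℝ)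
    {x : Fin n → ℂ} {mu : ℂ} (hx : M.map (↑) *ᵥ x = mu • x) (hsum : ∑ j, x j = 0)
    (hx0 : x ≠ 0) : mu ∈ secondTypeRegion M := by
  obtain ⟨k, hk⟩ := Function.ne_iff.1 hx0
  obtain ⟨i, -, hmax⟩ :=
    Finset.exists_max_image Finset.univ (fun j => ‖x j‖) ⟨k, Finset.mem_univ k⟩
  have hxi : x i ≠ 0 :=
    norm_pos_iff.1 ((norm_pos_iff.2 hk).trans_le (hmax k (Finset.mem_univ k)))
  exact Set.mem_iUnion.2
    ⟨i, mem_secondTypeDisc_of_mulVec_eq_smul M hx hsum hxi fun j => hmax j (Finset.mem_univ j)⟩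

lemma norm_le_of_mem_secondTypeDisc {n : ℕ} {M : Matrix (Fin n) (Fin n) ℝ} {i : Fin n} {mu : ℂ}
    (h : mu ∈ secondTypeDisc M i) : ‖mu‖ ≤ |M i i| + secondTypeRadius M i := by
  rw [secondTypeDisc, Metric.mem_closedBall, dist_eq_norm] at h
  calc ‖mu‖ ≤ ‖((M i i : ℝ) : ℂ)‖ + ‖mu - M i i‖ := norm_le_insert' _ _
    _ ≤ |M i i| + secondTypeRadius M i := by rw [Complex.norm_real, Real.norm_eq_abs]; gcongr

lemma charpoly_inv_mul_mul {R ι : Type*} [CommRing R] [Fintype ι] [DecidableEq ι]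
    (A : Matrix ι ι R) {S : Matrix ι ι R} (hS : IsUnit S.det) :
    (S⁻¹ * A * S).charpoly = A.charpoly := by
  rw [charpoly_mul_comm, ← mul_assoc, mul_nonsing_inv _ hS, one_mul]

lemma isEigenvalueC_inv_mul_mul_iff {n : ℕ} (A : Matrix (Fin n) (Fin n) ℝ)
    {S : Matrix (Fin n) (Fin n) ℝ} (hS : IsUnit S.det) (mu : ℂ) :
    IsEigenvalueC (S⁻¹ * A * S) mu ↔ IsEigenvalueC A mu := by
  have hmap (M : Matrix (Fin n) (Fin n) ℝ) :
      (M.map ((↑) : ℝ → ℂ)).charpoly = M.charpoly.map Complex.ofRealHom :=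
    charpoly_map M Complex.ofRealHom
  rw [IsEigenvalueC, IsEigenvalueC, hmap, hmap, charpoly_inv_mul_mul A hS]

lemma exists_vecMul_eq_smul_of_isEigenvalueC {n : ℕ} {A : Matrix (Fin n) (Fin n) ℝ} {mu : ℂ}
    (h : IsEigenvalueC A mu) : ∃ y : Fin n → ℂ, y ≠ 0 ∧ y ᵥ* A.map (↑) = mu • y := by
  rw [IsEigenvalueC, Polynomial.IsRoot, eval_charpoly] at h
  obtain ⟨y, hy0, hy⟩ := exists_vecMul_eq_zero_iff.2 h
  refine ⟨y, hy0, ?_⟩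
  rw [vecMul_sub, sub_eq_zero, scalar_apply] at hy
  rw [← hy]
  ext j
  simp [vecMul_diagonal, mul_comm]

lemma mulVec_inv_mul_mul_eq_smul {R ι : Type*} [CommRing R] [Fintype ι] [DecidableEq ι]
    {A S : Matrix ι ι R} (hS : IsUnit S.det) {w : ι → R} {c : R}
    (h : A *ᵥ (S *ᵥ w) = c • (S *ᵥ w)) : (S⁻¹ * A * S) *ᵥ w = c • w := by
  rw [← mulVec_mulVec, ← mulVec_mulVec, h, mulVec_smul, mulVec_mulVec, nonsing_inv_mul _ hS,
    one_mulVec]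

lemma sum_eq_zero_of_vecMul_eq_smul {K ι : Type*} [Field K] [Fintype ι] {B : Matrix ι ι K}
    {lam mu : K} {y : ι → K} (hB : B *ᵥ 1 = lam • 1) (hy : y ᵥ* B = mu • y) (hne : mu ≠ lam) :
    ∑ i, y i = 0 := by
  have h : mu * ∑ i, y i = lam * ∑ i, y i := by
    calc mu * ∑ i, y i = (y ᵥ* B) ⬝ᵥ 1 := by rw [hy, smul_dotProduct, dotProduct_one, smul_eq_mul]
      _ = lam * ∑ i, y i := by rw [← dotProduct_mulVec, hB, dotProduct_smul, dotProduct_one,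
          smul_eq_mul]
  by_contra hy0
  exact hne (mul_right_cancel₀ hy0 h)

lemma vecMul_eq_vecMul_of_sub_col {R ι : Type*} [CommRing R] [Fintype ι] {B F : Matrix ι ι R}
    {β : ι → R} (hF : ∀ i j, F i j = B i j - β j) {y : ι → R} (hy : ∑ i, y i = 0) :
    y ᵥ* F = y ᵥ* B := by
  ext j
  simp only [vecMul, dotProduct, hF, mul_sub, Finset.sum_sub_distrib, ← Finset.sum_mul, hy,
    zero_mul, sub_zero]

theorem stmt11_general {n : ℕ} (hpos : 0 < n) (A : Matrix (Fin n) (Fin n) ℝ)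
    (lam1 : ℝ) (v : Fin n → ℝ) (hv : ∀ i, v i ≠ 0) (hAv : A *ᵥ v = lam1 • v)
    (S B : Matrix (Fin n) (Fin n) ℝ) (hS : S = Matrix.diagonal v) (hB : B = S⁻¹ * A * S)
    (F : Matrix (Fin n) (Fin n) ℝ)
    (hF : ∀ i j, F i j = B i j - kthLargestOffDiag B j (n / 2))
    (mu : ℂ) (hmu : IsEigenvalueC A mu) (hne : mu ≠ (lam1 : ℂ)) :
    ‖mu‖ ≤
      Finset.univ.sup' ⟨(⟨0, hpos⟩ : Fin n), Finset.mem_univ _⟩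
        (fun i => |F i i| + secondTypeRadius Fᵀ i) := by
  have hS_det : IsUnit S.det := by
    rw [hS, det_diagonal, isUnit_iff_ne_zero]
    exact Finset.prod_ne_zero_iff.2 fun i _ => hv i
  have hrow : B *ᵥ 1 = lam1 • 1 := by
    rw [hB]
    refine mulVec_inv_mul_mul_eq_smul hS_det ?_
    have hv1 : diagonal v *ᵥ 1 = v := funext fun i => by simp [mulVec_diagonal]
    rw [hS, hv1, hAv]
  have hrowC : B.map ((↑) : ℝ → ℂ) *ᵥ 1 = (lam1 : ℂ) • 1 := by
    ext i
    have := congrArg ((↑) : ℝ → ℂ) (congrFun hrow i)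
    simpa [mulVec, dotProduct] using this
  obtain ⟨y, hy0, hyB⟩ := exists_vecMul_eq_smul_of_isEigenvalueC
    ((hB ▸ isEigenvalueC_inv_mul_mul_iff A hS_det mu).2 hmu)
  have hy_sum := sum_eq_zero_of_vecMul_eq_smul hrowC hyB hne
  have hyF : Fᵀ.map (↑) *ᵥ y = mu • y := by
    rw [transpose_map, mulVec_transpose,
      vecMul_eq_vecMul_of_sub_col (B := B.map (↑))
        (β := fun j => (kthLargestOffDiag B j (n / 2) : ℂ)) (fun i j => by simp [hF i j]) hy_sum,
      hyB]
  obtain ⟨i, hi⟩ := Set.mem_iUnion.1 (mem_secondTypeRegion_of_mulVec_eq_smul _ hyF hy_sum hy0)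
  exact (norm_le_of_mem_secondTypeDisc hi).trans
    (Finset.le_sup' (fun i => |F i i| + secondTypeRadius Fᵀ i) (Finset.mem_univ i))

/-- Theorem 7, even case bound (5): with `F` obtained from
`B = S⁻¹ A S` by Theorem 4, every eigenvalue `λ ≠ λ₁` of `A` satisfies
`|λ| ≤ max_i (|f_ii| + r̂_i(Fᵀ))`. -/
theorem stmt11 {n : ℕ} (hpos : 0 < n) (hn : Even n) (A : Matrix (Fin n) (Fin n) ℝ)
    (lam1 : ℝ) (v : Fin n → ℝ) (hv : ∀ i, v i ≠ 0) (hAv : A *ᵥ v = lam1 • v)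
    (S B : Matrix (Fin n) (Fin n) ℝ) (hS : S = Matrix.diagonal v) (hB : B = S⁻¹ * A * S)
    (F : Matrix (Fin n) (Fin n) ℝ)
    (hF : ∀ i j, F i j = B i j - kthLargestOffDiag B j (n / 2))
    (mu : ℂ) (hmu : IsEigenvalueC A mu) (hne : mu ≠ (lam1 : ℂ)) :
    ‖mu‖ ≤
      Finset.univ.sup' ⟨(⟨0, hpos⟩ : Fin n), Finset.mem_univ _⟩
        (fun i => |F i i| + secondTypeRadius Fᵀ i) :=
  stmt11_general hpos A lam1 v hv hAv S B hS hB F hF mu hmu hne
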